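/- arXiv:1010.3779 — 4 statements merged into one kernel-verified Lean document; each statement's English description precedes it below -/
import Mathlib

section
/- Let $q \in \mathbb{C}^\times$ and let $X, Y \in \mathrm{GL}_n(\mathbb{C})$, $i \in \mathbb{C}^n$ a column vector, and $j$ a row vector, satisfying $qXY - YX + ij = 0$. Then $1 - j\,X^{-1}Y^{-1}\,i = q^n$. -/
/-!
Since `X⁻¹ Y⁻¹ = (YX)⁻¹`, the relation gives `1 - (YX)⁻¹ i j = q (YX)⁻¹ (XY)`, whose determinant is
`qⁿ` because `XY` and `YX` have the same determinant. Sylvester's identity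
`det (1 - j A) = det (1 - A j)` turns the left side into `1 - j X⁻¹ Y⁻¹ i`.
-/

open Matrix

namespace Matrix

variable {m n R : Type*} [Fintype m] [Fintype n] [DecidableEq n] [CommRing R]

theorem one_sub_inv_mul_mul_eq_smul_inv_mul {q : R} {X Y : Matrix n n R} (hYX : IsUnit (Y * X).det)
    {i : Matrix n m R} {j : Matrix m n R} (h : q • (X * Y) - Y * X + i * j = 0) :
    1 - (Y * X)⁻¹ * i * j = q • ((Y * X)⁻¹ * (X * Y)) := by
  have hij : i * j = Y * X - q • (X * Y) := by linear_combination (norm := abel) h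
  rw [Matrix.mul_assoc, hij, Matrix.mul_sub, nonsing_inv_mul _ hYX, Matrix.mul_smul]
  abel

theorem det_one_sub_mul_inv_mul_inv_mul [DecidableEq m] {q : R} {X Y : Matrix n n R}
    (hX : IsUnit X.det) (hY : IsUnit Y.det) {i : Matrix n m R} {j : Matrix m n R}
    (h : q • (X * Y) - Y * X + i * j = 0) :
    (1 - j * X⁻¹ * Y⁻¹ * i).det = q ^ Fintype.card n := by
  have hYX : IsUnit (Y * X).det := by rw [det_mul]; exact hY.mul hX
  calc (1 - j * X⁻¹ * Y⁻¹ * i).det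
      = (1 - j * ((Y * X)⁻¹ * i)).det := by
        simp only [mul_inv_rev, Matrix.mul_assoc]
    _ = (1 - (Y * X)⁻¹ * i * j).det := det_one_sub_mul_comm _ _
    _ = (q • ((Y * X)⁻¹ * (X * Y))).det := by rw [one_sub_inv_mul_mul_eq_smul_inv_mul hYX h]
    _ = q ^ Fintype.card n := by
      rw [det_smul, det_mul, det_mul_comm, ← det_mul, nonsing_inv_mul _ hYX, det_one, mul_one]

end Matrix

theorem stmt_0_general (n : ℕ) (q : ℂ)
    (X Y : Matrix (Fin n) (Fin n) ℂ) (hX : IsUnit X.det) (hY : IsUnit Y.det)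
    (i : Matrix (Fin n) (Fin 1) ℂ) (j : Matrix (Fin 1) (Fin n) ℂ)
    (h : q • (X * Y) - Y * X + i * j = 0) :
    1 - (j * X⁻¹ * Y⁻¹ * i) 0 0 = q ^ n := by
  simpa [det_unique] using det_one_sub_mul_inv_mul_inv_mul hX hY h

theorem stmt_0 (n : ℕ) (q : ℂ) (hq : q ≠ 0)
    (X Y : Matrix (Fin n) (Fin n) ℂ) (hX : IsUnit X.det) (hY : IsUnit Y.det)
    (i : Matrix (Fin n) (Fin 1) ℂ) (j : Matrix (Fin 1) (Fin n) ℂ)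
    (h : q • (X * Y) - Y * X + i * j = 0) :
    1 - (j * X⁻¹ * Y⁻¹ * i) 0 0 = q ^ n :=
  stmt_0_general n q X Y hX hY i j h
end

section
/- Let $q \in \mathbb{C}^\times$ not be a root of unity, and let $\sigma$ be a $\mathbb{C}$-algebra automorphism of the quantum torus $A_q$. Then there exist $\alpha, \beta \in \mathbb{C}^\times$ and a matrix $\begin{pmatrix} a & b \\ c & d \end{pmatrix} \in \mathrm{SL}_2(\mathbb{Z})$ (i.e. $ad - bc = 1$) such that $\sigma(x) = \alpha\, y^b x^a$ and $\sigma(y) = \beta\, y^d x^c$. -/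
/-- The quantum torus `A_q = ℂ⟨x^{±1}, y^{±1}⟩/(xy - q·yx)`, presented abstractly:
a ℂ-algebra with two units `x`, `y` satisfying `x*y = q • (y*x)` such that the
monomials `x^a y^b` (for `(a,b) ∈ ℤ²`) form a ℂ-basis. -/
structure QuantumTorus (q : ℂˣ) (A : Type*) [Ring A] [Algebra ℂ A] where
  x : Aˣ
  y : Aˣ
  rel : (x : A) * (y : A) = (q : ℂ) • ((y : A) * (x : A))
  basis : Module.Basis (ℤ × ℤ) ℂ A
  basis_eq : ∀ ab : ℤ × ℤ, basis ab = ((x ^ ab.1 * y ^ ab.2 : Aˣ) : A)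

/-- `q` is not a root of unity. -/
def NotRootOfUnity (q : ℂˣ) : Prop := ∀ n : ℕ, 0 < n → q ^ n ≠ 1

/-! Let `u` be a unit with inverse `v` and write both in the monomial basis. Since `ℤ²` has
unique sums (`TwoUniqueSums`), if `u` or `v` had two monomials then `u * v` would have two
monomials with nonzero coefficient, which `1` does not; so every unit is a scalar multiple of
a monomial. In the unit group the commutator of `α y^b x^a` and `β y^d x^c` is `q^(ad - bc)`,
whereas applying `σ` to `x y = q y x` shows that it is `q`. As `q` has infinite order,
`ad - bc = 1`. -/

theorem NotRootOfUnity.zpow_injective {q : ℂˣ} (hq : NotRootOfUnity q) :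
    Function.Injective (fun n : ℤ => q ^ n) :=
  injective_zpow_iff_not_isOfFinOrder.2 fun hfin =>
    let ⟨n, hn, hqn⟩ := isOfFinOrder_iff_pow_eq_one.1 hfin
    hq n hn hqn

section CentralCommutator

variable {G : Type*} [Group G] {x y z : G}

theorem zpow_mul_zpow_of_mul_eq_mul_mul (hzx : Commute z x) (hzy : Commute z y)
    (h : x * y = z * (y * x)) (m n : ℤ) : x ^ m * y ^ n = z ^ (m * n) * (y ^ n * x ^ m) := by
  have hyx : SemiconjBy y x (z⁻¹ * x) := by
    rw [SemiconjBy, mul_assoc, h, inv_mul_cancel_left]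
  have hyxm : SemiconjBy y (x ^ m) (z ^ (-m) * x ^ m) := by
    simpa only [hzx.inv_left.mul_zpow, inv_zpow'] using hyx.zpow_right m
  have hxmy : SemiconjBy (x ^ m) y (z ^ m * y) := by
    rw [SemiconjBy, mul_assoc (z ^ m), hyxm.eq, ← mul_assoc, ← mul_assoc, ← zpow_add,
      add_neg_cancel, zpow_zero, one_mul]
  rw [(hxmy.zpow_right n).eq, (hzy.zpow_left m).mul_zpow, ← zpow_mul, mul_assoc]

theorem zpow_mul_zpow_mul_zpow_mul_zpow_of_mul_eq_mul_mul (hzx : Commute z x)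
    (hzy : Commute z y) (h : x * y = z * (y * x)) (a b c d : ℤ) :
    x ^ a * y ^ b * (x ^ c * y ^ d) = z ^ (-(b * c)) * (x ^ (a + c) * y ^ (b + d)) := by
  have hyx : y ^ b * x ^ c = z ^ (-(b * c)) * (x ^ c * y ^ b) := by
    rw [zpow_mul_zpow_of_mul_eq_mul_mul hzx hzy h c b, ← mul_assoc, ← zpow_add, mul_comm c b,
      neg_add_cancel, zpow_zero, one_mul]
  calc x ^ a * y ^ b * (x ^ c * y ^ d) = x ^ a * (y ^ b * x ^ c) * y ^ d := by group
    _ = z ^ (-(b * c)) * (x ^ (a + c) * y ^ (b + d)) := by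
      rw [hyx, ← mul_assoc (x ^ a), ← (hzx.zpow_zpow _ a).eq]
      group

theorem zpow_mul_zpow_mul_zpow_mul_zpow_comm (hzx : Commute z x) (hzy : Commute z y)
    (h : x * y = z * (y * x)) (a b c d : ℤ) :
    x ^ a * y ^ b * (x ^ c * y ^ d) = z ^ (a * d - b * c) * (x ^ c * y ^ d * (x ^ a * y ^ b)) := by
  rw [zpow_mul_zpow_mul_zpow_mul_zpow_of_mul_eq_mul_mul hzx hzy h,
    zpow_mul_zpow_mul_zpow_mul_zpow_of_mul_eq_mul_mul hzx hzy h,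
    ← mul_assoc (z ^ (a * d - b * c)), ← zpow_add, add_comm c a, add_comm d b]
  congr 2
  ring

end CentralCommutator

namespace Module.Basis

open Finset

variable {K A G : Type*} [CommSemiring K] [Semiring A] [Algebra K A] [Add G]
  {b : Basis G K A} {c : G → G → K}

theorem repr_mul_apply_add_of_uniqueAdd (hb : ∀ s t, b s * b t = c s t • b (s + t))
    {u v : A} {s₀ t₀ : G} (h : UniqueAdd (b.repr u).support (b.repr v).support s₀ t₀) :
    b.repr (u * v) (s₀ + t₀) = b.repr u s₀ * b.repr v t₀ * c s₀ t₀ := by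
  set f := b.repr u
  set g := b.repr v
  have hprod : u * v =
      ∑ p ∈ f.support ×ˢ g.support, (f p.1 * g p.2 * c p.1 p.2) • b (p.1 + p.2) := by
    conv_lhs => rw [← b.linearCombination_repr u, ← b.linearCombination_repr v]
    simp only [Finsupp.linearCombination_apply, Finsupp.sum, sum_mul_sum, sum_product,
      smul_mul_smul_comm, hb, smul_smul]
    rfl
  rw [hprod, map_sum, Finsupp.finsetSum_apply, sum_eq_single (s₀, t₀)]
  · simp
  · rintro ⟨s, t⟩ hst hne
    have : s + t ≠ s₀ + t₀ := fun hsum =>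
      hne (Prod.ext_iff.2 (h (mem_product.1 hst).1 (mem_product.1 hst).2 hsum))
    simp [this]
  · intro hst
    rcases not_and_or.1 (mt mem_product.2 hst) with hs | ht
    · simp [Finsupp.notMem_support_iff.1 hs]
    · simp [Finsupp.notMem_support_iff.1 ht]

theorem exists_eq_smul_of_card_support_mul_le_one [NoZeroDivisors K] [TwoUniqueSums G]
    (hb : ∀ s t, b s * b t = c s t • b (s + t)) (hc : ∀ s t, c s t ≠ 0) {u v : A}
    (hu : u ≠ 0) (hv : v ≠ 0) (huv : #(b.repr (u * v)).support ≤ 1) :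
    ∃ (k : K) (s : G), k ≠ 0 ∧ u = k • b s := by
  set F := (b.repr u).support
  set H := (b.repr v).support
  have hF : F.Nonempty := Finsupp.support_nonempty_iff.2 (b.repr.map_ne_zero_iff.2 hu)
  have hH : H.Nonempty := Finsupp.support_nonempty_iff.2 (b.repr.map_ne_zero_iff.2 hv)
  have hcard : #F * #H ≤ 1 := by
    by_contra! hlt
    obtain ⟨p, hp, p', hp', hne, hup, hup'⟩ := TwoUniqueSums.uniqueAdd_of_one_lt_card hlt
    have mem_support {p : G × G} (hp : p ∈ F ×ˢ H) (hup : UniqueAdd F H p.1 p.2) :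
        p.1 + p.2 ∈ (b.repr (u * v)).support := by
      rw [Finsupp.mem_support_iff, repr_mul_apply_add_of_uniqueAdd hb hup]
      exact mul_ne_zero (mul_ne_zero (Finsupp.mem_support_iff.1 (mem_product.1 hp).1)
        (Finsupp.mem_support_iff.1 (mem_product.1 hp).2)) (hc _ _)
    have hsum : p.1 + p.2 ≠ p'.1 + p'.2 := fun heq =>
      hne (Prod.ext_iff.2 (hup (mem_product.1 hp').1 (mem_product.1 hp').2 heq.symm)).symm
    exact (one_lt_card.2 ⟨_, mem_support hp hup, _, mem_support hp' hup', hsum⟩).not_ge huv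
  obtain ⟨s, hs⟩ := card_eq_one.1
    ((Nat.le_mul_of_pos_right _ hH.card_pos).trans hcard |>.antisymm hF.card_pos)
  obtain ⟨hk, hrepr⟩ := Finsupp.support_eq_singleton.1 hs
  exact ⟨_, s, hk, by rw [← b.repr_symm_single, ← hrepr, LinearEquiv.symm_apply_apply]⟩

theorem exists_eq_smul_of_isUnit [Nontrivial K] [NoZeroDivisors K] [TwoUniqueSums G]
    (hb : ∀ s t, b s * b t = c s t • b (s + t)) (hc : ∀ s t, c s t ≠ 0) {s₁ : G}
    (hone : b s₁ = 1) {u : A} (hu : IsUnit u) : ∃ (k : K) (s : G), k ≠ 0 ∧ u = k • b s := by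
  have : Nontrivial A := ⟨⟨b s₁, 0, b.ne_zero s₁⟩⟩
  obtain ⟨w, rfl⟩ := hu
  refine exists_eq_smul_of_card_support_mul_le_one hb hc w.ne_zero w⁻¹.ne_zero ?_
  rw [Units.mul_inv, ← hone, repr_self]
  exact (card_le_card Finsupp.support_single_subset).trans (card_singleton _).le

end Module.Basis

section UnitsAlgebraMap

variable {R A : Type*} [CommSemiring R] [Semiring A] [Algebra R A]

theorem Units.val_map_algebraMap_mul (k : Rˣ) (u : Aˣ) :
    ((Units.map (algebraMap R A : R →* A) k * u : Aˣ) : A) = (k : R) • (u : A) :=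
  (Algebra.smul_def _ _).symm

theorem Units.commute_map_algebraMap (k : Rˣ) (u : Aˣ) :
    Commute (Units.map (algebraMap R A : R →* A) k) u :=
  Units.ext (Algebra.commutes _ _)

theorem AlgEquiv.units_map_map_algebraMap (σ : A ≃ₐ[R] A) (k : Rˣ) :
    Units.map (σ : A →* A) (Units.map (algebraMap R A : R →* A) k) =
      Units.map (algebraMap R A : R →* A) k :=
  Units.ext (σ.commutes k)

end UnitsAlgebraMap

namespace QuantumTorus

variable {q : ℂˣ} {A : Type*} [Ring A] [Algebra ℂ A] (T : QuantumTorus q A)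

local notation "ι" => Units.map (algebraMap ℂ A : ℂ →* A)

theorem x_mul_y : T.x * T.y = ι q * (T.y * T.x) :=
  Units.ext (by rw [Units.val_map_algebraMap_mul, Units.val_mul, Units.val_mul, T.rel])

theorem y_mul_x : T.y * T.x = (ι q)⁻¹ * (T.x * T.y) := by
  rw [T.x_mul_y, inv_mul_cancel_left]

theorem basis_mul (s t : ℤ × ℤ) :
    T.basis s * T.basis t = ((q ^ (-(s.2 * t.1)) : ℂˣ) : ℂ) • T.basis (s + t) := by
  rw [T.basis_eq, T.basis_eq, T.basis_eq, ← Units.val_mul,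
    zpow_mul_zpow_mul_zpow_mul_zpow_of_mul_eq_mul_mul (Units.commute_map_algebraMap _ _)
      (Units.commute_map_algebraMap _ _) T.x_mul_y, ← map_zpow, Units.val_map_algebraMap_mul]
  rfl

theorem basis_zero : T.basis 0 = 1 := by
  simp [T.basis_eq]

theorem exists_eq_map_algebraMap_mul_zpow_mul_zpow (u : Aˣ) :
    ∃ (k : ℂˣ) (a b : ℤ), u = ι k * (T.y ^ b * T.x ^ a) := by
  obtain ⟨k, ⟨a, b⟩, hk, hu⟩ := T.basis.exists_eq_smul_of_isUnit T.basis_mul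
    (fun _ _ => Units.ne_zero _) T.basis_zero u.isUnit
  refine ⟨Units.mk0 k hk * q ^ (a * b), a, b, Units.ext ?_⟩
  rw [Units.val_map_algebraMap_mul, hu, T.basis_eq, zpow_mul_zpow_of_mul_eq_mul_mul
      (Units.commute_map_algebraMap _ _) (Units.commute_map_algebraMap _ _) T.x_mul_y,
    ← map_zpow, Units.val_map_algebraMap_mul, smul_smul]
  rfl

theorem zpow_det_eq_self_of_mul_eq {u v : Aˣ} (huv : u * v = ι q * (v * u)) {α β : ℂˣ}
    {a b c d : ℤ} (hu : u = ι α * (T.y ^ b * T.x ^ a)) (hv : v = ι β * (T.y ^ d * T.x ^ c)) :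
    q ^ (a * d - b * c) = q := by
  set M := T.y ^ b * T.x ^ a
  set N := T.y ^ d * T.x ^ c
  have hcen (k : ℂˣ) (w : Aˣ) := Units.commute_map_algebraMap k w
  have hMN : ι (α * β) * (M * N) = ι (α * β) * (ι q * (N * M)) := by
    rwa [hu, hv, (hcen β M).symm.mul_mul_mul_comm, (hcen α N).symm.mul_mul_mul_comm,
      ← map_mul, ← map_mul, mul_comm β, (hcen q _).left_comm] at huv
  have hcomm := zpow_mul_zpow_mul_zpow_mul_zpow_comm (hcen _ _).inv_left (hcen _ _).inv_left
    T.y_mul_x b a d c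
  rw [mul_left_cancel hMN] at hcomm
  have : Nontrivial A := ⟨⟨_, _, T.basis.ne_zero 0⟩⟩
  apply Units.map_injective (algebraMap ℂ A).injective
  calc ι (q ^ (a * d - b * c)) = (ι q)⁻¹ ^ (b * c - a * d) := by
        rw [map_zpow, inv_zpow', neg_sub]
    _ = ι q := (mul_right_cancel hcomm).symm

end QuantumTorus

theorem stmt_13 (q : ℂˣ) (hq : NotRootOfUnity q) (A : Type*) [Ring A] [Algebra ℂ A]
    (T : QuantumTorus q A) (σ : A ≃ₐ[ℂ] A) :
    ∃ (α β : ℂˣ) (a b c d : ℤ), a * d - b * c = 1 ∧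
      σ (T.x : A) = (α : ℂ) • ((T.y ^ b * T.x ^ a : Aˣ) : A) ∧
      σ (T.y : A) = (β : ℂ) • ((T.y ^ d * T.x ^ c : Aˣ) : A) := by
  let σ' : Aˣ →* Aˣ := Units.map (σ : A →* A)
  obtain ⟨α, a, b, hx⟩ := T.exists_eq_map_algebraMap_mul_zpow_mul_zpow (σ' T.x)
  obtain ⟨β, c, d, hy⟩ := T.exists_eq_map_algebraMap_mul_zpow_mul_zpow (σ' T.y)
  have hrel := congr_arg σ' T.x_mul_y
  rw [map_mul, map_mul, map_mul, AlgEquiv.units_map_map_algebraMap] at hrel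
  have hdet : q ^ (a * d - b * c) = q ^ (1 : ℤ) :=
    (T.zpow_det_eq_self_of_mul_eq hrel hx hy).trans (zpow_one q).symm
  refine ⟨α, β, a, b, c, d, hq.zpow_injective hdet, ?_, ?_⟩
  · rw [← Units.val_map_algebraMap_mul, ← hx]; rfl
  · rw [← Units.val_map_algebraMap_mul, ← hy]; rfl
end

section
/- Let $X \in \mathrm{GL}_n(\mathbb{C})$, $Y$ an $n \times n$ complex matrix, $i \in \mathbb{C}^n$ a column vector and $j$ a row vector. Let $k, l$ be nonzero integers, and suppose that $j\, Y^s X^r\, i = 0$ for all integers $s, r \ge 0$ with $k(s+1) \neq l(r+1)$. Then $j\, Y^s X^r\, i = 0$ for all $s, r \ge 0$. -/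
open Matrix Polynomial

namespace Matrix

variable {R : Type*} [CommRing R] {m n o : Type*} [Fintype n] [DecidableEq n]

theorem isUnit_charpoly_coeff_zero {X : Matrix n n R} (hX : IsUnit X.det) :
    IsUnit (X.charpoly.coeff 0) := by
  rw [det_eq_sign_charpoly_coeff] at hX
  exact isUnit_of_mul_isUnit_right hX

theorem mul_aeval_mul_mul_eq_zero {X : Matrix n n R} {A : Matrix m n R} {B : Matrix n o R}
    (h : ∀ p : ℕ, A * X ^ (p + 1) * B = 0) (q : R[X]) : A * (aeval X q * X) * B = 0 := by
  simp only [aeval_eq_sum_range, Finset.sum_mul, smul_mul_assoc, ← pow_succ, Matrix.mul_sum,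
    Matrix.sum_mul, Matrix.mul_smul, Matrix.smul_mul, h, smul_zero, Finset.sum_const_zero]

/-- By Cayley–Hamilton, `c₀ • 1 = -(q(X) * X)` with `c₀ = ± det X` the constant coefficient
of the characteristic polynomial, so `1` lies in the span of the positive powers of `X`. -/
theorem mul_eq_zero_of_forall_mul_pow_succ_mul_eq_zero {X : Matrix n n R} (hX : IsUnit X.det)
    {A : Matrix m n R} {B : Matrix n o R} (h : ∀ p : ℕ, A * X ^ (p + 1) * B = 0) :
    A * B = 0 := by
  have hCH : aeval X (divX X.charpoly) * X + X.charpoly.coeff 0 • (1 : Matrix n n R) = 0 := by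
    simpa [Algebra.algebraMap_eq_smul_one] using
      congrArg (aeval X) (divX_mul_X_add X.charpoly) |>.trans (aeval_self_charpoly X)
  have hsmul : X.charpoly.coeff 0 • (A * B) = 0 :=
    calc X.charpoly.coeff 0 • (A * B) = A * (X.charpoly.coeff 0 • (1 : Matrix n n R)) * B := by
          simp
      _ = -(A * (aeval X (divX X.charpoly) * X) * B) := by
          rw [eq_neg_of_add_eq_zero_right hCH, Matrix.mul_neg, Matrix.neg_mul]
      _ = 0 := by rw [mul_aeval_mul_mul_eq_zero h, neg_zero]
  exact (isUnit_charpoly_coeff_zero hX).smul_eq_zero.mp hsmul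

end Matrix

theorem stmt_15_general (n : ℕ) (X Y : Matrix (Fin n) (Fin n) ℂ) (hX : IsUnit X.det)
    (i : Matrix (Fin n) (Fin 1) ℂ) (j : Matrix (Fin 1) (Fin n) ℂ)
    (k l : ℤ) (hl : l ≠ 0)
    (h : ∀ s r : ℕ, k * ((s : ℤ) + 1) ≠ l * ((r : ℤ) + 1) → j * Y ^ s * X ^ r * i = 0) :
    ∀ s r : ℕ, j * Y ^ s * X ^ r * i = 0 := by
  intro s r
  by_cases hsr : k * ((s : ℤ) + 1) = l * ((r : ℤ) + 1)
  · refine mul_eq_zero_of_forall_mul_pow_succ_mul_eq_zero hX fun p => ?_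
    rw [Matrix.mul_assoc (j * Y ^ s), ← pow_add]
    refine h s (r + (p + 1)) ?_
    rw [hsr, Ne, mul_right_inj' hl]
    omega
  · exact h s r hsr

theorem stmt_15 (n : ℕ) (X Y : Matrix (Fin n) (Fin n) ℂ) (hX : IsUnit X.det)
    (i : Matrix (Fin n) (Fin 1) ℂ) (j : Matrix (Fin 1) (Fin n) ℂ)
    (k l : ℤ) (hk : k ≠ 0) (hl : l ≠ 0)
    (h : ∀ s r : ℕ, k * ((s : ℤ) + 1) ≠ l * ((r : ℤ) + 1) → j * Y ^ s * X ^ r * i = 0) :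
    ∀ s r : ℕ, j * Y ^ s * X ^ r * i = 0 :=
  stmt_15_general n X Y hX i j k l hl h
end

section
/- Let $q \in \mathbb{C}^\times$, $n \ge 1$, and suppose $(X, Y, i, j)$ with $X, Y \in \mathrm{GL}_n(\mathbb{C})$, $i$ a column vector, $j$ a row vector, satisfies $qXY - YX + ij = 0$. If $g \in \mathrm{GL}_n(\mathbb{C})$ satisfies $gXg^{-1} = X$, $gYg^{-1} = Y$, $gi = i$ and $jg^{-1} = j$, and if moreover $q^m \ne 1$ for all $1 \le m \le n$, then $g = 1_n$; i.e., the $\mathrm{GL}_n(\mathbb{C})$-action on the space $\tilde{\mathcal{C}}_n^q$ is free. -/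
/-!
If `g` commutes with `X` and `Y` and fixes the column `i`, its fixed space `U` contains the
range of `i * j = Y X - q X Y` and is stable under `X` and `Y`. On `ℂⁿ ⧸ U` the invertible maps
induced by `X` and `Y` then satisfy `Y X = q X Y`; taking determinants gives `q ^ m = 1` with
`m = dim (ℂⁿ ⧸ U) ≤ n`, so `m = 0`, i.e. `U = ℂⁿ` and `g = 1`.
-/

open Matrix Module LinearMap

section

variable {K V : Type*} [Field K] [AddCommGroup V] [Module K V] [FiniteDimensional K V]

theorem Module.End.pow_finrank_eq_one_of_mul_eq_smul_mul {f g : End K V}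
    (hf : IsUnit f) (hg : IsUnit g) {q : K} (h : g * f = q • (f * g)) :
    q ^ finrank K V = 1 := by
  have hdet : LinearMap.det f * LinearMap.det g =
      q ^ finrank K V * (LinearMap.det f * LinearMap.det g) := by
    simpa [LinearMap.det_smul, mul_comm (LinearMap.det g)] using congrArg LinearMap.det h
  have hu : LinearMap.det f * LinearMap.det g ≠ 0 := by
    simpa using ((hf.mul hg).map LinearMap.det).ne_zero
  exact mul_right_cancel₀ hu (hdet.symm.trans (one_mul _).symm)

theorem Submodule.isUnit_mapQ {f : End K V} (hf : IsUnit f) {U : Submodule K V}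
    (hU : U ≤ U.comap f) : IsUnit (U.mapQ U f hU) := by
  rw [isUnit_iff_range_eq_top] at hf ⊢
  rw [Submodule.range_mapQ, hf, Submodule.map_top, Submodule.range_mkQ]

theorem Submodule.eq_top_of_range_mul_sub_smul_mul_le {f g : End K V} (hf : IsUnit f)
    (hg : IsUnit g) {q : K} (hq : ∀ m : ℕ, 1 ≤ m → m ≤ finrank K V → q ^ m ≠ 1)
    {U : Submodule K V} (hUf : U ≤ U.comap f) (hUg : U ≤ U.comap g)
    (hU : range (g * f - q • (f * g)) ≤ U) : U = ⊤ := by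
  by_contra hne
  have : Nontrivial (V ⧸ U) := Submodule.Quotient.nontrivial_iff.mpr hne
  refine hq _ finrank_pos U.finrank_quotient_le
    (End.pow_finrank_eq_one_of_mul_eq_smul_mul (U.isUnit_mapQ hf hUf) (U.isUnit_mapQ hg hUg) ?_)
  refine Submodule.linearMap_qext _ (LinearMap.ext fun v => ?_)
  have hv : g (f v) - q • f (g v) ∈ U := hU ⟨v, rfl⟩
  simpa [Submodule.mapQ_apply, ← Submodule.Quotient.mk_smul, Submodule.Quotient.eq] using hv

end

theorem Matrix.commute_of_mul_mul_inv_eq {m K : Type*} [Fintype m] [DecidableEq m] [Field K]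
    {g A : Matrix m m K} (hg : IsUnit g.det) (h : g * A * g⁻¹ = A) : Commute g A :=
  calc g * A = g * A * g⁻¹ * g := by rw [Matrix.mul_assoc _ g⁻¹, nonsing_inv_mul _ hg, mul_one]
    _ = A * g := by rw [h]

theorem stmt_17_general (n : ℕ) (q : ℂ)
    (hq : ∀ m : ℕ, 1 ≤ m → m ≤ n → q ^ m ≠ 1)
    (X Y : Matrix (Fin n) (Fin n) ℂ) (hX : IsUnit X.det) (hY : IsUnit Y.det)
    (i : Matrix (Fin n) (Fin 1) ℂ) (j : Matrix (Fin 1) (Fin n) ℂ)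
    (h : q • (X * Y) - Y * X + i * j = 0)
    (g : Matrix (Fin n) (Fin n) ℂ) (hg : IsUnit g.det)
    (hgX : g * X * g⁻¹ = X) (hgY : g * Y * g⁻¹ = Y)
    (hgi : g * i = i) :
    g = 1 := by
  have hYX : toLin' Y * toLin' X - q • (toLin' X * toLin' Y) = (toLin' i).comp (toLin' j) := by
    have : Y * X - q • (X * Y) = i * j := eq_of_sub_eq_zero (by rw [← neg_eq_zero, ← h]; abel)
    rw [← toLin'_mul, ← this, map_sub, map_smul, toLin'_mul, toLin'_mul]
    rfl
  have hi : range (toLin' i) ≤ End.eigenspace (toLin' g) 1 := by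
    rintro _ ⟨v, rfl⟩
    rw [End.mem_eigenspace_iff, one_smul, ← toLin'_mul_apply, hgi]
  have hgX' := (commute_of_mul_mul_inv_eq hg hgX).map toLinAlgEquiv'
  have hgY' := (commute_of_mul_mul_inv_eq hg hgY).map toLinAlgEquiv'
  have hfix : End.eigenspace (toLin' g) 1 = ⊤ :=
    Submodule.eq_top_of_range_mul_sub_smul_mul_le
      (isUnit_toLin'_iff.2 ((isUnit_iff_isUnit_det X).2 hX))
      (isUnit_toLin'_iff.2 ((isUnit_iff_isUnit_det Y).2 hY))
      (fun m hm hmn => hq m hm (by simpa using hmn))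
      (End.mapsTo_genEigenspace_of_comm hgX' 1 1)
      (End.mapsTo_genEigenspace_of_comm hgY' 1 1)
      (hYX ▸ (range_comp_le_range _ _).trans hi)
  refine toLinAlgEquiv'.injective (LinearMap.ext fun v => ?_)
  have hv : v ∈ End.eigenspace (toLin' g) 1 := hfix ▸ Submodule.mem_top
  simpa using End.mem_eigenspace_iff.1 hv

theorem stmt_17 (n : ℕ) (hn : 1 ≤ n) (q : ℂ)
    (hq : ∀ m : ℕ, 1 ≤ m → m ≤ n → q ^ m ≠ 1)
    (X Y : Matrix (Fin n) (Fin n) ℂ) (hX : IsUnit X.det) (hY : IsUnit Y.det)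
    (i : Matrix (Fin n) (Fin 1) ℂ) (j : Matrix (Fin 1) (Fin n) ℂ)
    (h : q • (X * Y) - Y * X + i * j = 0)
    (g : Matrix (Fin n) (Fin n) ℂ) (hg : IsUnit g.det)
    (hgX : g * X * g⁻¹ = X) (hgY : g * Y * g⁻¹ = Y)
    (hgi : g * i = i) (hgj : j * g⁻¹ = j) :
    g = 1 :=
  stmt_17_general n q hq X Y hX hY i j h g hg hgX hgY hgi
end
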